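/- Let n ≥ 1, m > 0 and 0 < θ ≤ 1 with n − 2θ > 0, and let δ₀ > 0. Then there exists a constant C > 0 depending only on n and θ such that for all t ≥ 1 and all P₁ ∈ ℝ, ∫_{|ξ| ≤ δ₀} |φ(t,ξ)|² dξ ≤ C (P₁²/m²) t^{-(n−2θ)/2}. -/

import Mathlib

/-!
Since `log (1 + x) ≥ x / (1 + x)`, on `|ξ| ≤ δ₀` the frequency
`|ξ|² + m² log (1 + |ξ|^{2θ})` is at least `m² |ξ|^{2θ} / (1 + δ₀^{2θ})`, so that
`|φ(t,ξ)|² ≤ (1 + δ₀^{2θ}) (P₁² / m²) |ξ|^{-2θ} e^{-t|ξ|²}`. In polar coordinates the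
right-hand side integrates to a multiple of
`∫₀^∞ r^{n-1-2θ} e^{-t r²} dr = Γ((n - 2θ)/2) t^{-(n-2θ)/2} / 2`, which is finite as `n > 2θ`.
-/

open MeasureTheory Real

noncomputable section

/-- Euclidean space `ℝⁿ`. -/
abbrev E (n : ℕ) := EuclideanSpace ℝ (Fin n)

/-- The asymptotic profile `φ(t,ξ)`, as a function of `r = |ξ|`. -/
def phi (m θ P₁ t r : ℝ) : ℝ :=
  P₁ * Real.exp (-(r ^ 2) * t / 2) *
    Real.sin (t * Real.sqrt (r ^ 2 + m ^ 2 * Real.log (1 + r ^ (2 * θ)))) /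
    Real.sqrt (r ^ 2 + m ^ 2 * Real.log (1 + r ^ (2 * θ)))

open Set Metric

lemma setIntegral_norm_le_eq_integral_Ioc {F G : Type*} [NormedAddCommGroup F] [NormedSpace ℝ F]
    [MeasurableSpace F] [BorelSpace F] [FiniteDimensional ℝ F] [Nontrivial F]
    [NormedAddCommGroup G] [NormedSpace ℝ G]
    (μ : Measure F) [μ.IsAddHaarMeasure] (f : ℝ → G) (δ : ℝ) :
    ∫ x in {x : F | ‖x‖ ≤ δ}, f ‖x‖ ∂μ =
      (Module.finrank ℝ F * μ.real (ball 0 1)) •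
        ∫ y in Ioc 0 δ, y ^ (Module.finrank ℝ F - 1) • f y := by
  have hS : {x : F | ‖x‖ ≤ δ} = norm ⁻¹' Iic δ := rfl
  rw [← integral_indicator (measurableSet_le measurable_norm measurable_const), hS]
  have h (x : F) : (norm ⁻¹' Iic δ).indicator (fun x => f ‖x‖) x = (Iic δ).indicator f ‖x‖ :=
    indicator_comp_right (fun x : F => ‖x‖)
  simp_rw [h]
  rw [integral_fun_norm_addHaar μ ((Iic δ).indicator f), ← Nat.cast_smul_eq_nsmul ℝ, smul_smul,
    ← Ioi_inter_Iic, ← setIntegral_indicator measurableSet_Iic]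
  simp only [indicator_smul]

lemma integral_rpow_mul_exp_neg_mul_sq {q b : ℝ} (hq : -1 < q) (hb : 0 < b) :
    ∫ y in Ioi (0 : ℝ), y ^ q * exp (-b * y ^ 2) = b ^ (-(q + 1) / 2) * (Gamma ((q + 1) / 2) / 2) := by
  simp_rw [← rpow_two]
  rw [integral_rpow_mul_exp_neg_mul_rpow two_pos hq hb]
  ring

lemma div_le_log_one_add {A K : ℝ} (hA : 0 ≤ A) (hAK : 1 + A ≤ K) : A / K ≤ log (1 + A) := by
  calc A / K ≤ A / (1 + A) := div_le_div_of_nonneg_left hA (by linarith) hAK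
    _ = 1 - (1 + A)⁻¹ := by field_simp; ring
    _ ≤ log (1 + A) := one_sub_inv_le_log_of_pos (by linarith)

lemma phi_sq_le_div {m θ P₁ t r : ℝ} (hr : 0 ≤ r) :
    phi m θ P₁ t r ^ 2 ≤ P₁ ^ 2 * exp (-t * r ^ 2) / (r ^ 2 + m ^ 2 * log (1 + r ^ (2 * θ))) := by
  have hD : 0 ≤ r ^ 2 + m ^ 2 * log (1 + r ^ (2 * θ)) := by
    have := rpow_nonneg hr (2 * θ)
    have := log_nonneg (show 1 ≤ 1 + r ^ (2 * θ) by linarith)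
    positivity
  have hexp : exp (-(r ^ 2) * t / 2) ^ 2 = exp (-t * r ^ 2) := by
    rw [← exp_nat_mul]; ring_nf
  rw [phi, div_pow, sq_sqrt hD, mul_pow, mul_pow, hexp]
  refine div_le_div_of_nonneg_right ?_ hD
  exact mul_le_of_le_one_right (by positivity) (sin_sq_le_one _)

lemma mul_rpow_div_le_sq_add_log {m θ r δ : ℝ} (hθ : 0 ≤ θ) (hr : 0 ≤ r) (hrδ : r ≤ δ) :
    m ^ 2 * (r ^ (2 * θ) / (1 + δ ^ (2 * θ))) ≤ r ^ 2 + m ^ 2 * log (1 + r ^ (2 * θ)) := by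
  have hA : 0 ≤ r ^ (2 * θ) := rpow_nonneg hr _
  have hAδ : r ^ (2 * θ) ≤ δ ^ (2 * θ) := rpow_le_rpow hr hrδ (by positivity)
  have := div_le_log_one_add hA (add_le_add_right hAδ 1)
  nlinarith [sq_nonneg r, sq_nonneg m]

lemma phi_sq_le {m θ P₁ t r δ : ℝ} (hm : m ≠ 0) (hθ : 0 < θ) (hr : 0 ≤ r) (hrδ : r ≤ δ) :
    phi m θ P₁ t r ^ 2 ≤
      P₁ ^ 2 / m ^ 2 * (1 + δ ^ (2 * θ)) * (r ^ (-(2 * θ)) * exp (-t * r ^ 2)) := by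
  rcases hr.eq_or_lt with rfl | hr
  -- at `r = 0` both sides are junk zeros: `0 ^ (2θ) = 0` makes `phi` divide by `0`, and `0 ^ (-2θ) = 0`
  · simp [phi, zero_rpow, hθ.ne']
  have hK : 0 < 1 + δ ^ (2 * θ) := by
    have := rpow_nonneg (hr.le.trans hrδ) (2 * θ)
    linarith
  have hA : 0 < r ^ (2 * θ) := rpow_pos_of_pos hr _
  calc phi m θ P₁ t r ^ 2
      ≤ P₁ ^ 2 * exp (-t * r ^ 2) / (r ^ 2 + m ^ 2 * log (1 + r ^ (2 * θ))) := phi_sq_le_div hr.le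
    _ ≤ P₁ ^ 2 * exp (-t * r ^ 2) / (m ^ 2 * (r ^ (2 * θ) / (1 + δ ^ (2 * θ)))) :=
        div_le_div_of_nonneg_left (by positivity) (by positivity)
          (mul_rpow_div_le_sq_add_log hθ.le hr.le hrδ)
    _ = P₁ ^ 2 / m ^ 2 * (1 + δ ^ (2 * θ)) * (r ^ (-(2 * θ)) * exp (-t * r ^ 2)) := by
        rw [rpow_neg hr.le]
        field_simp

lemma integral_Ioc_pow_mul_phi_sq_le {m θ t : ℝ} {k : ℕ} (hm : m ≠ 0) (hθ : 0 < θ)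
    (hk : -1 < k - 2 * θ) (ht : 0 < t) (P₁ : ℝ) {δ : ℝ} (hδ : 0 ≤ δ) :
    ∫ y in Ioc 0 δ, y ^ k * phi m θ P₁ t y ^ 2 ≤
      P₁ ^ 2 / m ^ 2 * (1 + δ ^ (2 * θ)) *
        (t ^ (-(k - 2 * θ + 1) / 2) * (Gamma ((k - 2 * θ + 1) / 2) / 2)) := by
  set c := P₁ ^ 2 / m ^ 2 * (1 + δ ^ (2 * θ))
  set g : ℝ → ℝ := fun y => c * (y ^ ((k : ℝ) - 2 * θ) * exp (-t * y ^ 2))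
  have hg : IntegrableOn g (Ioi 0) := (integrableOn_rpow_mul_exp_neg_mul_sq ht hk).const_mul c
  have hc : 0 ≤ c := by positivity
  calc ∫ y in Ioc 0 δ, y ^ k * phi m θ P₁ t y ^ 2
      ≤ ∫ y in Ioc 0 δ, g y := by
        refine integral_mono_of_nonneg (ae_restrict_of_forall_mem measurableSet_Ioc
          fun y hy => by have := hy.1.le; positivity) (hg.mono_set Ioc_subset_Ioi_self)
          (ae_restrict_of_forall_mem measurableSet_Ioc fun y hy => ?_)
        calc y ^ k * phi m θ P₁ t y ^ 2
            ≤ y ^ k * (c * (y ^ (-(2 * θ)) * exp (-t * y ^ 2))) :=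
              mul_le_mul_of_nonneg_left (phi_sq_le hm hθ hy.1.le hy.2) (pow_nonneg hy.1.le k)
          _ = g y := by
              simp only [g]
              rw [sub_eq_add_neg, rpow_add hy.1, rpow_natCast]
              ring
    _ ≤ ∫ y in Ioi 0, g y :=
        setIntegral_mono_set hg (ae_restrict_of_forall_mem measurableSet_Ioi
          fun y hy => by have := mem_Ioi.mp hy; positivity) Ioc_subset_Ioi_self.eventuallyLE
    _ = c * (t ^ (-(k - 2 * θ + 1) / 2) * (Gamma ((k - 2 * θ + 1) / 2) / 2)) := by
        rw [integral_const_mul, integral_rpow_mul_exp_neg_mul_sq hk ht]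

theorem stmt13_general (n : ℕ) (m θ : ℝ) (hm : 0 < m) (hθ1 : 0 < θ)
    (hnθ : 0 < (n : ℝ) - 2 * θ) (δ₀ : ℝ) (hδ₀ : 0 < δ₀) :
    ∃ C : ℝ, 0 < C ∧ ∀ t : ℝ, 1 ≤ t → ∀ P₁ : ℝ,
      (∫ ξ in {ξ : E n | ‖ξ‖ ≤ δ₀}, (phi m θ P₁ t ‖ξ‖) ^ 2) ≤
        C * (P₁ ^ 2 / m ^ 2) * t ^ (-((n : ℝ) - 2 * θ) / 2) := by
  have hn : 1 ≤ n := (Nat.cast_pos (α := ℝ)).mp (by linarith)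
  have : Nonempty (Fin n) := ⟨⟨0, hn⟩⟩
  have hk : ((n - 1 : ℕ) : ℝ) - 2 * θ + 1 = n - 2 * θ := by push_cast [Nat.cast_sub hn]; ring
  set σ := n * volume.real (ball (0 : E n) 1)
  have hσ : 0 < σ := mul_pos (by positivity)
    (ENNReal.toReal_pos (measure_ball_pos _ _ one_pos).ne' measure_ball_lt_top.ne)
  refine ⟨σ * (1 + δ₀ ^ (2 * θ)) * (Gamma ((n - 2 * θ) / 2) / 2),
    by have := Gamma_pos_of_pos (half_pos hnθ); positivity, fun t ht P₁ => ?_⟩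
  calc ∫ ξ in {ξ : E n | ‖ξ‖ ≤ δ₀}, phi m θ P₁ t ‖ξ‖ ^ 2
      = σ * ∫ y in Ioc 0 δ₀, y ^ (n - 1) * phi m θ P₁ t y ^ 2 := by
        rw [setIntegral_norm_le_eq_integral_Ioc volume (fun r => phi m θ P₁ t r ^ 2),
          finrank_euclideanSpace_fin, smul_eq_mul]
        simp only [smul_eq_mul, σ]
    _ ≤ σ * (P₁ ^ 2 / m ^ 2 * (1 + δ₀ ^ (2 * θ)) *
          (t ^ (-(((n - 1 : ℕ) : ℝ) - 2 * θ + 1) / 2) *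
            (Gamma ((((n - 1 : ℕ) : ℝ) - 2 * θ + 1) / 2) / 2))) := by
        gcongr
        exact integral_Ioc_pow_mul_phi_sq_le hm.ne' hθ1 (by linarith) (by linarith) P₁ hδ₀.le
    _ = σ * (1 + δ₀ ^ (2 * θ)) * (Gamma ((n - 2 * θ) / 2) / 2) * (P₁ ^ 2 / m ^ 2) *
          t ^ (-((n : ℝ) - 2 * θ) / 2) := by
        rw [hk]; ring

/-- Lemma 6.1: low-frequency decay of the profile. -/
theorem stmt13 (n : ℕ) (hn : 1 ≤ n) (m θ : ℝ) (hm : 0 < m) (hθ1 : 0 < θ) (hθ2 : θ ≤ 1)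
    (hnθ : 0 < (n : ℝ) - 2 * θ) (δ₀ : ℝ) (hδ₀ : 0 < δ₀) :
    ∃ C : ℝ, 0 < C ∧ ∀ t : ℝ, 1 ≤ t → ∀ P₁ : ℝ,
      (∫ ξ in {ξ : E n | ‖ξ‖ ≤ δ₀}, (phi m θ P₁ t ‖ξ‖) ^ 2) ≤
        C * (P₁ ^ 2 / m ^ 2) * t ^ (-((n : ℝ) - 2 * θ) / 2) :=
  stmt13_general n m θ hm hθ1 hnθ δ₀ hδ₀

end
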